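/- Let M be a maximum-weight matching of a complete bipartite graph between agents and items with nonnegative weights, let R be the associated relation graph on items (edge ⟨b,b'⟩ of weight v_a(b) − v_a(b') for (a,b) ∈ M, b' ≠ b), and let C be a directed cycle in R of total weight 0, say on items b₀, b₁, …, b_ℓ (indices mod ℓ+1) with b_j matched to agent a_j. Then the matching M' obtained from M by removing the pairs (a_j, b_j) and adding the pairs (a_j, b_{j+1 mod ℓ+1}) for all j is also a maximum-weight matching. -/

import Mathlib

/-! Rotating the matching along the cycle changes its weight by exactly the weight of the
cycle in the relation graph: item `c (j+1)` passes from agent `m (c (j+1))` to `m (c j)`, so the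
loss is `∑ j, (v (m (c j)) (c j) - v (m (c j)) (c (j+1)))`. A zero-weight cycle therefore yields
a matching of the same, hence maximum, weight. -/

open Finset

theorem List.formPerm_ofFn_apply {α : Type*} [DecidableEq α] {n : ℕ} {c : Fin (n + 1) → α}
    (hc : Function.Injective c) (j : Fin (n + 1)) :
    (List.ofFn c).formPerm (c j) = c (j + 1) := by
  have h := List.formPerm_apply_getElem (List.ofFn c) (List.nodup_ofFn.2 hc) j
    (by simp [j.isLt])
  simp only [List.getElem_ofFn, List.length_ofFn] at h
  rw [h]
  congr 1
  ext
  simp [Fin.val_add]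

theorem Finset.sum_formPerm_ofFn {α M : Type*} [Fintype α] [DecidableEq α] [AddCommMonoid M]
    {n : ℕ} {c : Fin (n + 1) → α} (hc : Function.Injective c) (f : α → α → M)
    (hf : ∀ b, f b b = 0) :
    ∑ b, f b ((List.ofFn c).formPerm b) = ∑ j, f (c j) (c (j + 1)) := by
  have hsupp : ∑ b ∈ univ.image c, f b ((List.ofFn c).formPerm b)
      = ∑ b, f b ((List.ofFn c).formPerm b) := by
    refine sum_subset (subset_univ _) fun b _ hb => ?_
    rw [List.formPerm_apply_of_notMem (by simpa only [List.mem_ofFn, mem_image, mem_univ, true_and,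
      Set.mem_range] using hb), hf]
  rw [← hsupp, sum_image fun _ _ _ _ h => hc h]
  exact sum_congr rfl fun j _ => by rw [List.formPerm_ofFn_apply hc]

theorem Equiv.sum_symm_trans_apply {α β M : Type*} [Fintype α] [AddCommMonoid M]
    (σ : Equiv.Perm α) (m : α ≃ β) (w : β → α → M) :
    ∑ b, w (σ.symm.trans m b) b = ∑ b, w (m b) (σ b) := by
  simpa using (Equiv.sum_comp σ fun b => w (m (σ.symm b)) b).symm

theorem stmt_18 {N I : Type*} [Fintype I] [DecidableEq I]
    (v : N → I → ℝ)
    (m : I ≃ N)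
    (hmax : ∀ m'' : I ≃ N, ∑ b, v (m'' b) b ≤ ∑ b, v (m b) b)
    (ℓ : ℕ) (c : Fin (ℓ + 1) → I) (hinj : Function.Injective c)
    (hzero : ∑ j : Fin (ℓ + 1), (v (m (c j)) (c j) - v (m (c j)) (c (j + 1))) = 0) :
    ∀ m' : I ≃ N, m' = ((List.ofFn c).formPerm).symm.trans m →
      (∑ b, v (m' b) b = ∑ b, v (m b) b) ∧
        ∀ m'' : I ≃ N, ∑ b, v (m'' b) b ≤ ∑ b, v (m' b) b := by
  rintro m' rfl
  have hloss : ∑ b, v (m b) b - ∑ b, v ((List.ofFn c).formPerm.symm.trans m b) b = 0 := by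
    rw [Equiv.sum_symm_trans_apply, ← sum_sub_distrib,
      sum_formPerm_ofFn hinj (fun b b' => v (m b) b - v (m b) b') fun _ => sub_self _]
    exact hzero
  have hweight := (sub_eq_zero.1 hloss).symm
  exact ⟨hweight, fun m'' => hweight ▸ hmax m''⟩
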